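/- arXiv:1609.00771 — 6 statements merged into one kernel-verified Lean document; each statement's English description precedes it below -/
import Mathlib

section
/- Every rational sector in R^2 can be partitioned into finitely many regular sectors: if v1, v2 ∈ Z^2 \ {0} are linearly independent over R, then there exist primitive lattice points u_0 = v1', u_1, ..., u_d = v2' (where v1', v2' are the primitive generators of the rays R_+ v1, R_+ v2) lying in the sector R_+ v1 + R_+ v2, ordered counterclockwise, such that |det[u_{i-1} u_i]| = 1 for all i = 1, ..., d. -/
/-!
Write `wedge x y` for the determinant `det [x y]`. For primitive `w₁, w₂` with `D = wedge w₁ w₂ > 1`,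
complete `w₁` to a lattice basis by some `u` with `wedge w₁ u = 1`; replacing `u` by `u + t w₁` moves
`wedge u w₂` by `t D`, so it can be taken in `[0, D)`, and it is not `0` since otherwise
`w₂ = D u` would not be primitive. Then `u` lies in the sector of `w₁, w₂` and `wedge u w₂ < D`, so
induction on `D` yields the chain `w₁, u, …, w₂`.
-/

def wedge {R : Type*} [CommRing R] (x y : R × R) : R := x.1 * y.2 - x.2 * y.1

section WedgeIdentities

variable {R : Type*} [CommRing R]

lemma wedge_self (x : R × R) : wedge x x = 0 := by
  simp only [wedge]; ring

lemma wedge_swap (x y : R × R) : wedge y x = -wedge x y := by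
  simp only [wedge]; ring

lemma wedge_smul_left (a : R) (x y : R × R) : wedge (a • x) y = a * wedge x y := by
  simp only [wedge, Prod.smul_fst, Prod.smul_snd, smul_eq_mul]; ring

lemma wedge_smul_right (a : R) (x y : R × R) : wedge x (a • y) = a * wedge x y := by
  simp only [wedge, Prod.smul_fst, Prod.smul_snd, smul_eq_mul]; ring

lemma wedge_add_smul_left (x y z : R × R) (t : R) :
    wedge (x + t • z) y = wedge x y + t * wedge z y := by
  simp only [wedge, Prod.fst_add, Prod.snd_add, Prod.smul_fst, Prod.smul_snd, smul_eq_mul]; ring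

lemma wedge_add_smul_self_right (x y : R × R) (t : R) : wedge x (y + t • x) = wedge x y := by
  simp only [wedge, Prod.fst_add, Prod.snd_add, Prod.smul_fst, Prod.smul_snd, smul_eq_mul]; ring

/-- Cramer's rule. -/
lemma wedge_smul_eq (x y z : R × R) : wedge x y • z = wedge z y • x + wedge x z • y := by
  ext <;> simp only [wedge, Prod.smul_fst, Prod.smul_snd, Prod.fst_add, Prod.snd_add,
    smul_eq_mul] <;> ring

lemma wedge_mul_wedge (a x y z : R × R) :
    wedge x y * wedge a z = wedge z y * wedge a x + wedge x z * wedge a y := by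
  simp only [wedge]; ring

lemma isCoprime_of_wedge_eq_one {w u : R × R} (h : wedge w u = 1) : IsCoprime u.1 u.2 :=
  ⟨-w.2, w.1, by rw [← h, wedge]; ring⟩

lemma exists_wedge_eq_one {w : R × R} (h : IsCoprime w.1 w.2) : ∃ u, wedge w u = 1 := by
  obtain ⟨a, b, hab⟩ := h
  exact ⟨(-b, a), by rw [wedge, ← hab]; ring⟩

end WedgeIdentities

lemma exists_wedge_eq_one_of_wedge_pos {w₁ w₂ : ℤ × ℤ} (h₁ : IsCoprime w₁.1 w₁.2)
    (hpos : 0 < wedge w₁ w₂) :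
    ∃ u, wedge w₁ u = 1 ∧ 0 ≤ wedge u w₂ ∧ wedge u w₂ < wedge w₁ w₂ := by
  obtain ⟨u, hu⟩ := exists_wedge_eq_one h₁
  have hmod : wedge (u + -(wedge u w₂ / wedge w₁ w₂) • w₁) w₂ = wedge u w₂ % wedge w₁ w₂ := by
    rw [wedge_add_smul_left, Int.emod_def]; ring
  refine ⟨u + -(wedge u w₂ / wedge w₁ w₂) • w₁, ?_, ?_, ?_⟩
  · rwa [wedge_add_smul_self_right]
  · rw [hmod]; exact Int.emod_nonneg _ hpos.ne'
  · rw [hmod]; exact Int.emod_lt_of_pos _ hpos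

lemma wedge_ne_zero_of_wedge_eq_one {w₁ w₂ u : ℤ × ℤ} (h₂ : IsCoprime w₂.1 w₂.2)
    (hu : wedge w₁ u = 1) (hD : 1 < wedge w₁ w₂) : wedge u w₂ ≠ 0 := by
  intro h0
  have hw₂ : w₂ = wedge w₁ w₂ • u := by
    simpa [hu, wedge_swap u w₂, h0] using wedge_smul_eq w₁ u w₂
  rw [hw₂, Prod.smul_fst, Prod.smul_snd, smul_eq_mul, smul_eq_mul] at h₂
  have hunit : IsUnit (wedge w₁ w₂) :=
    isCoprime_self.mp (h₂.of_mul_left_left.of_mul_right_left)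
  rcases Int.isUnit_iff.mp hunit with h | h <;> omega

structure IsRegularChain (w₁ w₂ : ℤ × ℤ) (d : ℕ) (u : ℕ → ℤ × ℤ) : Prop where
  one_le : 1 ≤ d
  head : u 0 = w₁
  last : u d = w₂
  isCoprime : ∀ i ≤ d, IsCoprime (u i).1 (u i).2
  wedge_left_nonneg : ∀ i ≤ d, 0 ≤ wedge w₁ (u i)
  wedge_right_nonneg : ∀ i ≤ d, 0 ≤ wedge (u i) w₂
  wedge_succ : ∀ i < d, wedge (u i) (u (i + 1)) = 1

namespace IsRegularChain

lemma single {w₁ w₂ : ℤ × ℤ} (h₁ : IsCoprime w₁.1 w₁.2) (h₂ : IsCoprime w₂.1 w₂.2)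
    (h : wedge w₁ w₂ = 1) :
    IsRegularChain w₁ w₂ 1 (fun | 0 => w₁ | _ + 1 => w₂) where
  one_le := le_rfl
  head := rfl
  last := rfl
  isCoprime := by rintro (_ | _) _ <;> assumption
  wedge_left_nonneg := by rintro (_ | _) _ <;> simp [wedge_self, h]
  wedge_right_nonneg := by rintro (_ | _) _ <;> simp [wedge_self, h]
  wedge_succ := by rintro (_ | _) hi <;> simp_all

lemma cons {w₁ w₂ u : ℤ × ℤ} {d : ℕ} {c : ℕ → ℤ × ℤ} (hc : IsRegularChain u w₂ d c)
    (h₁ : IsCoprime w₁.1 w₁.2) (hu : wedge w₁ u = 1) (hw : 0 ≤ wedge w₁ w₂)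
    (hu₂ : 0 < wedge u w₂) :
    IsRegularChain w₁ w₂ (d + 1) (fun | 0 => w₁ | i + 1 => c i) where
  one_le := by omega
  head := rfl
  last := hc.last
  isCoprime := by
    rintro (_ | i) hi
    exacts [h₁, hc.isCoprime i (by omega)]
  wedge_left_nonneg := by
    rintro (_ | i) hi
    · exact (wedge_self w₁).ge
    · -- `c i` lies in the sector of `u, w₂`, which lies in that of `w₁, w₂`
      have key := wedge_mul_wedge w₁ u w₂ (c i)
      rw [hu, mul_one] at key
      refine nonneg_of_mul_nonneg_right ?_ hu₂
      rw [key]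
      exact add_nonneg (hc.wedge_right_nonneg i (by omega))
        (mul_nonneg (hc.wedge_left_nonneg i (by omega)) hw)
  wedge_right_nonneg := by
    rintro (_ | i) hi
    exacts [hw, hc.wedge_right_nonneg i (by omega)]
  wedge_succ := by
    rintro (_ | i) hi
    · simpa [hc.head] using hu
    · exact hc.wedge_succ i (by omega)

end IsRegularChain

theorem exists_isRegularChain {w₁ w₂ : ℤ × ℤ} (h₁ : IsCoprime w₁.1 w₁.2)
    (h₂ : IsCoprime w₂.1 w₂.2) (hpos : 0 < wedge w₁ w₂) :
    ∃ d u, IsRegularChain w₁ w₂ d u := by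
  obtain hD | hD := (Int.add_one_le_of_lt hpos).eq_or_lt
  · exact ⟨1, _, IsRegularChain.single h₁ h₂ hD.symm⟩
  obtain ⟨u, hu, hu₂, hlt⟩ := exists_wedge_eq_one_of_wedge_pos h₁ hpos
  have hu₂ : 0 < wedge u w₂ := hu₂.lt_of_ne (wedge_ne_zero_of_wedge_eq_one h₂ hu hD).symm
  obtain ⟨d, c, hc⟩ := exists_isRegularChain (isCoprime_of_wedge_eq_one hu) h₂ hu₂
  exact ⟨d + 1, _, hc.cons h₁ hu hpos.le hu₂⟩
termination_by (wedge w₁ w₂).toNat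
decreasing_by omega

lemma exists_isCoprime_smul_eq {v : ℤ × ℤ} (hv : v ≠ 0) :
    ∃ g : ℤ, 0 < g ∧ ∃ w : ℤ × ℤ, IsCoprime w.1 w.2 ∧ v = g • w := by
  have hg : 0 < Int.gcd v.1 v.2 := Int.gcd_pos_iff.mpr (by
    by_contra! h; exact hv (Prod.ext h.1 h.2))
  obtain ⟨g, a, b, hg, hab, ha, hb⟩ := Int.exists_gcd_one' hg
  refine ⟨g, by exact_mod_cast hg, (a, b), Int.isCoprime_iff_gcd_eq_one.mpr hab, ?_⟩
  ext <;> simp [ha, hb, mul_comm]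

lemma exists_mem_cone_of_wedge_nonneg {v₁ v₂ z : ℤ × ℤ} (hD : 0 < wedge v₁ v₂)
    (h₁ : 0 ≤ wedge v₁ z) (h₂ : 0 ≤ wedge z v₂) :
    ∃ a b : ℝ, 0 ≤ a ∧ 0 ≤ b ∧
      (z.1 : ℝ) = a * v₁.1 + b * v₂.1 ∧ (z.2 : ℝ) = a * v₁.2 + b * v₂.2 := by
  have hD' : (0 : ℝ) < wedge v₁ v₂ := by exact_mod_cast hD
  obtain ⟨e₁, e₂⟩ := Prod.ext_iff.mp (wedge_smul_eq v₁ v₂ z)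
  simp only [Prod.smul_fst, Prod.smul_snd, Prod.fst_add, Prod.snd_add, smul_eq_mul] at e₁ e₂
  refine ⟨wedge z v₂ / wedge v₁ v₂, wedge v₁ z / wedge v₁ v₂, by positivity, by positivity, ?_, ?_⟩
  · field_simp; exact_mod_cast (mul_comm z.1 _).trans e₁
  · field_simp; exact_mod_cast (mul_comm z.2 _).trans e₂

def IsRegularSubdivision (v₁ v₂ : ℤ × ℤ) (d : ℕ) (u : ℕ → ℤ × ℤ) : Prop :=
  1 ≤ d ∧
    (∀ i ≤ d, IsCoprime (u i).1 (u i).2) ∧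
    (∃ c : ℝ, 0 < c ∧ (v₁.1 : ℝ) = c * (u 0).1 ∧ (v₁.2 : ℝ) = c * (u 0).2) ∧
    (∃ c : ℝ, 0 < c ∧ (v₂.1 : ℝ) = c * (u d).1 ∧ (v₂.2 : ℝ) = c * (u d).2) ∧
    (∀ i ≤ d, ∃ a b : ℝ, 0 ≤ a ∧ 0 ≤ b ∧
      ((u i).1 : ℝ) = a * v₁.1 + b * v₂.1 ∧ ((u i).2 : ℝ) = a * v₁.2 + b * v₂.2) ∧
    (∀ i, 1 ≤ i → i ≤ d →
      |wedge (u (i - 1)) (u i)| = 1 ∧ 0 < wedge (u (i - 1)) (u i) * wedge v₁ v₂)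

lemma IsRegularSubdivision.reverse {v₁ v₂ : ℤ × ℤ} {d : ℕ} {u : ℕ → ℤ × ℤ}
    (h : IsRegularSubdivision v₂ v₁ d u) :
    IsRegularSubdivision v₁ v₂ d (fun i => u (d - i)) := by
  obtain ⟨hd, hcop, hlast, hhead, hcone, hwedge⟩ := h
  refine ⟨hd, fun i hi => hcop _ (by omega), by simpa using hhead, by simpa using hlast, ?_, ?_⟩
  · intro i hi
    obtain ⟨a, b, ha, hb, h₁, h₂⟩ := hcone (d - i) (by omega)
    exact ⟨b, a, hb, ha, by linarith, by linarith⟩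
  · intro i hi₁ hi₂
    obtain ⟨j, rfl⟩ := Nat.exists_eq_add_of_le' hi₁
    obtain ⟨habs, hsign⟩ := hwedge (d - j) (by omega) (by omega)
    rw [show d - j - 1 = d - (j + 1) by omega, wedge_swap, abs_neg] at habs
    rw [show d - j - 1 = d - (j + 1) by omega, wedge_swap, wedge_swap v₁ v₂, neg_mul_neg] at hsign
    exact ⟨habs, hsign⟩

lemma IsRegularChain.isRegularSubdivision {v₁ v₂ w₁ w₂ : ℤ × ℤ} {g₁ g₂ : ℤ} {d : ℕ}
    {u : ℕ → ℤ × ℤ} (hc : IsRegularChain w₁ w₂ d u) (hg₁ : 0 < g₁) (hg₂ : 0 < g₂)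
    (hv₁ : v₁ = g₁ • w₁) (hv₂ : v₂ = g₂ • w₂) (hD : 0 < wedge v₁ v₂) :
    IsRegularSubdivision v₁ v₂ d u := by
  subst hv₁ hv₂
  refine ⟨hc.one_le, hc.isCoprime, ⟨g₁, by exact_mod_cast hg₁, ?_⟩, ⟨g₂, by exact_mod_cast hg₂, ?_⟩,
    fun i hi => exists_mem_cone_of_wedge_nonneg hD ?_ ?_, fun i hi₁ hi₂ => ?_⟩
  · simp [hc.head]
  · simp [hc.last]
  · rw [wedge_smul_left]; exact mul_nonneg hg₁.le (hc.wedge_left_nonneg i hi)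
  · rw [wedge_smul_right]; exact mul_nonneg hg₂.le (hc.wedge_right_nonneg i hi)
  · obtain ⟨j, rfl⟩ := Nat.exists_eq_add_of_le' hi₁
    simpa [hc.wedge_succ j (by omega)] using hD

lemma exists_isRegularSubdivision_of_wedge_pos {v₁ v₂ : ℤ × ℤ} (hD : 0 < wedge v₁ v₂) :
    ∃ d u, IsRegularSubdivision v₁ v₂ d u := by
  have hv₁ : v₁ ≠ 0 := by rintro rfl; simp [wedge] at hD
  have hv₂ : v₂ ≠ 0 := by rintro rfl; simp [wedge] at hD
  obtain ⟨g₁, hg₁, w₁, hw₁, rfl⟩ := exists_isCoprime_smul_eq hv₁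
  obtain ⟨g₂, hg₂, w₂, hw₂, rfl⟩ := exists_isCoprime_smul_eq hv₂
  have hw : 0 < wedge w₁ w₂ := by
    rw [wedge_smul_left, wedge_smul_right] at hD
    exact pos_of_mul_pos_right (pos_of_mul_pos_right hD hg₁.le) hg₂.le
  obtain ⟨d, u, hc⟩ := exists_isRegularChain hw₁ hw₂ hw
  exact ⟨d, u, hc.isRegularSubdivision hg₁ hg₂ rfl rfl hD⟩

lemma wedge_ne_zero_of_linearIndependent {v₁ v₂ : ℤ × ℤ}
    (hind : ∀ a b : ℝ, a * v₁.1 + b * v₂.1 = 0 → a * v₁.2 + b * v₂.2 = 0 → a = 0 ∧ b = 0) :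
    wedge v₁ v₂ ≠ 0 := by
  intro h
  have hR : (v₁.1 : ℝ) * v₂.2 - v₁.2 * v₂.1 = 0 := by exact_mod_cast h
  obtain ⟨-, h₁₂⟩ := hind v₂.2 (-v₁.2) (by linarith) (by ring)
  obtain ⟨-, h₁₁⟩ := hind v₂.1 (-v₁.1) (by ring) (by linarith)
  have := hind 1 0 (by linarith) (by linarith)
  norm_num at this

theorem stmt2_general (v1 v2 : ℤ × ℤ)
    (hind : ∀ a b : ℝ, a * v1.1 + b * v2.1 = 0 → a * v1.2 + b * v2.2 = 0 → a = 0 ∧ b = 0) :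
    ∃ (d : ℕ) (u : ℕ → ℤ × ℤ), 1 ≤ d ∧
      (∀ i ≤ d, IsCoprime (u i).1 (u i).2) ∧
      (∃ c : ℝ, 0 < c ∧ (v1.1 : ℝ) = c * (u 0).1 ∧ (v1.2 : ℝ) = c * (u 0).2) ∧
      (∃ c : ℝ, 0 < c ∧ (v2.1 : ℝ) = c * (u d).1 ∧ (v2.2 : ℝ) = c * (u d).2) ∧
      (∀ i ≤ d, ∃ a b : ℝ, 0 ≤ a ∧ 0 ≤ b ∧
        ((u i).1 : ℝ) = a * v1.1 + b * v2.1 ∧ ((u i).2 : ℝ) = a * v1.2 + b * v2.2) ∧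
      (∀ i, 1 ≤ i → i ≤ d →
        |(u (i-1)).1 * (u i).2 - (u (i-1)).2 * (u i).1| = 1 ∧
        0 < ((u (i-1)).1 * (u i).2 - (u (i-1)).2 * (u i).1) *
            (v1.1 * v2.2 - v1.2 * v2.1)) := by
  rcases (wedge_ne_zero_of_linearIndependent hind).lt_or_gt with hneg | hpos
  · obtain ⟨d, u, h⟩ := exists_isRegularSubdivision_of_wedge_pos (v₁ := v2) (v₂ := v1)
      (by rw [wedge_swap]; exact neg_pos.mpr hneg)
    exact ⟨d, _, h.reverse⟩
  · exact exists_isRegularSubdivision_of_wedge_pos hpos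

/-- every rational sector can be partitioned into finitely many regular
sectors: there is a counterclockwise-ordered chain of primitive lattice points in the
sector, starting at the primitive generator of ℝ₊v1 and ending at that of ℝ₊v2, with
consecutive determinants of absolute value 1. -/
theorem stmt2 (v1 v2 : ℤ × ℤ) (hv1 : v1 ≠ 0) (hv2 : v2 ≠ 0)
    (hind : ∀ a b : ℝ, a * v1.1 + b * v2.1 = 0 → a * v1.2 + b * v2.2 = 0 → a = 0 ∧ b = 0) :
    ∃ (d : ℕ) (u : ℕ → ℤ × ℤ), 1 ≤ d ∧
      (∀ i ≤ d, IsCoprime (u i).1 (u i).2) ∧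
      (∃ c : ℝ, 0 < c ∧ (v1.1 : ℝ) = c * (u 0).1 ∧ (v1.2 : ℝ) = c * (u 0).2) ∧
      (∃ c : ℝ, 0 < c ∧ (v2.1 : ℝ) = c * (u d).1 ∧ (v2.2 : ℝ) = c * (u d).2) ∧
      (∀ i ≤ d, ∃ a b : ℝ, 0 ≤ a ∧ 0 ≤ b ∧
        ((u i).1 : ℝ) = a * v1.1 + b * v2.1 ∧ ((u i).2 : ℝ) = a * v1.2 + b * v2.2) ∧
      (∀ i, 1 ≤ i → i ≤ d →
        |(u (i-1)).1 * (u i).2 - (u (i-1)).2 * (u i).1| = 1 ∧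
        0 < ((u (i-1)).1 * (u i).2 - (u (i-1)).2 * (u i).1) *
            (v1.1 * v2.2 - v1.2 * v2.1)) :=
  stmt2_general v1 v2 hind
end

section
/- Let σ be a regular sector with boundary ray generators u1, u2 ∈ Z^2, and let u ∈ Z^2 be a primitive point in the interior of σ. Then both sectors R_+ u1 + R_+ u and R_+ u + R_+ u2 are regular if and only if u = u1 + u2. -/
/-!
With `D = det(u₁, u₂) = ±1`, Cramer's rule gives `det(u, u₂) • u₁ + det(u₁, u) • u₂ = D • u`, and
writing `u = a u₁ + b u₂` with `a, b > 0` shows `det(u, u₂) = a D` and `det(u₁, u) = b D`, so both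
have the sign of `D`. Hence both subsectors are regular exactly when both determinants equal `D`,
i.e. when `D • u = D • (u₁ + u₂)`.
-/

def det2 (v w : ℤ × ℤ) : ℤ := v.1 * w.2 - v.2 * w.1

lemma det2_add_right_self (v w : ℤ × ℤ) : det2 v (v + w) = det2 v w := by
  simp only [det2, Prod.fst_add, Prod.snd_add]; ring

lemma det2_add_left_self (v w : ℤ × ℤ) : det2 (v + w) w = det2 v w := by
  simp only [det2, Prod.fst_add, Prod.snd_add]; ring

lemma det2_smul_add_smul (v w u : ℤ × ℤ) : det2 u w • v + det2 v u • w = det2 v w • u := by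
  ext <;> simp only [det2, Prod.fst_add, Prod.snd_add, Prod.smul_fst, Prod.smul_snd, smul_eq_mul] <;>
    ring

section RealCombination

variable {v w u : ℤ × ℤ} {a b : ℝ}
  (h1 : (u.1 : ℝ) = a * v.1 + b * w.1) (h2 : (u.2 : ℝ) = a * v.2 + b * w.2)
include h1 h2

lemma det2_left_eq_of_combination : (det2 u w : ℝ) = a * det2 v w := by
  push_cast [det2]; rw [h1, h2]; ring

lemma det2_right_eq_of_combination : (det2 v u : ℝ) = b * det2 v w := by
  push_cast [det2]; rw [h1, h2]; ring

lemma det2_left_mul_pos_of_combination (ha : 0 < a) (hvw : det2 v w ≠ 0) :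
    0 < det2 u w * det2 v w := by
  have : (0 : ℝ) < det2 u w * det2 v w := by
    rw [det2_left_eq_of_combination h1 h2, mul_assoc]
    exact mul_pos ha (mul_self_pos.mpr (Int.cast_ne_zero.mpr hvw))
  exact_mod_cast this

lemma det2_right_mul_pos_of_combination (hb : 0 < b) (hvw : det2 v w ≠ 0) :
    0 < det2 v u * det2 v w := by
  have : (0 : ℝ) < det2 v u * det2 v w := by
    rw [det2_right_eq_of_combination h1 h2, mul_assoc]
    exact mul_pos hb (mul_self_pos.mpr (Int.cast_ne_zero.mpr hvw))
  exact_mod_cast this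

end RealCombination

lemma Int.eq_of_abs_eq_one_of_mul_pos {x y : ℤ} (hx : |x| = 1) (hy : |y| = 1) (hxy : 0 < x * y) :
    x = y := by
  rcases abs_eq_abs.mp (hx.trans hy.symm) with h | h
  · exact h
  · subst h; nlinarith

theorem stmt3_general (u1 u2 u : ℤ × ℤ)
    (hreg : |u1.1 * u2.2 - u1.2 * u2.1| = 1)
    (hint : ∃ a b : ℝ, 0 < a ∧ 0 < b ∧
      (u.1 : ℝ) = a * u1.1 + b * u2.1 ∧ (u.2 : ℝ) = a * u1.2 + b * u2.2) :
    (|u1.1 * u.2 - u1.2 * u.1| = 1 ∧ |u.1 * u2.2 - u.2 * u2.1| = 1) ↔ u = u1 + u2 := by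
  obtain ⟨a, b, ha, hb, h1, h2⟩ := hint
  change |det2 u1 u2| = 1 at hreg
  change |det2 u1 u| = 1 ∧ |det2 u u2| = 1 ↔ _
  have hD : det2 u1 u2 ≠ 0 := by rintro h; simp [h] at hreg
  constructor
  · rintro ⟨hleft, hright⟩
    have e1 : det2 u u2 = det2 u1 u2 := Int.eq_of_abs_eq_one_of_mul_pos hright hreg
      (det2_left_mul_pos_of_combination h1 h2 ha hD)
    have e2 : det2 u1 u = det2 u1 u2 := Int.eq_of_abs_eq_one_of_mul_pos hleft hreg
      (det2_right_mul_pos_of_combination h1 h2 hb hD)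
    have cramer := det2_smul_add_smul u1 u2 u
    rw [e1, e2, ← smul_add] at cramer
    exact (smul_right_injective _ hD cramer).symm
  · rintro rfl
    rw [det2_add_right_self, det2_add_left_self]
    exact ⟨hreg, hreg⟩

/-- splitting a regular sector by an interior primitive ray yields two
regular sectors if and only if the ray is generated by the sum of the two facet
generators. -/
theorem stmt3 (u1 u2 u : ℤ × ℤ)
    (hreg : |u1.1 * u2.2 - u1.2 * u2.1| = 1)
    (hprim1 : IsCoprime u1.1 u1.2) (hprim2 : IsCoprime u2.1 u2.2)
    (hprim : IsCoprime u.1 u.2)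
    (hint : ∃ a b : ℝ, 0 < a ∧ 0 < b ∧
      (u.1 : ℝ) = a * u1.1 + b * u2.1 ∧ (u.2 : ℝ) = a * u1.2 + b * u2.2) :
    (|u1.1 * u.2 - u1.2 * u.1| = 1 ∧ |u.1 * u2.2 - u.2 * u2.1| = 1) ↔ u = u1 + u2 :=
  stmt3_general u1 u2 u hreg hint
end

section
/- Let F : R^2 → R^2 be a homeomorphism such that there is a finite collection of linear maps L_1, ..., L_d ∈ GL(2,R) and closed sectors σ_1, ..., σ_d covering R^2 with F = L_i on σ_i for each i. If F maps Z^2 bijectively onto Z^2 and F is orientation preserving, then each L_i restricted to σ_i agrees with an element of SL(2,Z); in particular det L_i = 1 and L_i has integer entries. -/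
/-- The lattice ℤ² inside ℝ² (vectors `Fin 2 → ℝ`). -/
def latticePts : Set (Fin 2 → ℝ) := {x | ∃ p : Fin 2 → ℤ, x = fun i => (p i : ℝ)}

/-- The closed rational sector generated by lattice vectors `v, w`. -/
def sector2 (v w : Fin 2 → ℤ) : Set (Fin 2 → ℝ) :=
  {x | ∃ s t : ℝ, 0 ≤ s ∧ 0 ≤ t ∧
    x = fun i => s * (v i : ℝ) + t * (w i : ℝ)}

/-!
A nondegenerate rational sector contains a whole unit square of lattice points `p`, `p + e₀`,
`p + e₁`. If a real matrix `A` sends the lattice points of such a sector to lattice points, then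
its columns `A e_j = A (p + e_j) - A p` are integral. Applying this both to `L = F` on `σ` and to
`L⁻¹ = F⁻¹` on the (again rational) sector `L σ` shows that `L` and `L⁻¹` are integral, so
`det L` is a positive unit of `ℤ`.
-/

open Matrix

lemma abs_mul_sub_mul_le {R : Type*} [Ring R] [LinearOrder R] [IsOrderedRing R] {a b x y : R}
    (hx : |x| ≤ 1) (hy : |y| ≤ 1) : |a * x - b * y| ≤ |a| + |b| :=
  calc |a * x - b * y| ≤ |a * x| + |b * y| := abs_sub _ _
    _ = |a| * |x| + |b| * |y| := by rw [abs_mul, abs_mul]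
    _ ≤ |a| + |b| := add_le_add (mul_le_of_le_one_right (abs_nonneg a) hx)
        (mul_le_of_le_one_right (abs_nonneg b) hy)

lemma add_mul_nonneg_of_abs_le {M D c : ℤ} (hD : D ≠ 0) (hc : |c| ≤ M) :
    0 ≤ (M * D + c) * D := by
  have h1 : 1 ≤ |D| := Int.one_le_abs hD
  have h2 : -(|c| * |D|) ≤ c * D := by rw [← abs_mul]; exact neg_abs_le _
  have hM : 0 ≤ M := (abs_nonneg c).trans hc
  nlinarith [abs_mul_abs_self D, mul_nonneg (mul_nonneg hM (abs_nonneg D)) (sub_nonneg.mpr h1),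
    mul_le_mul_of_nonneg_right hc (abs_nonneg D)]

lemma cross_mulVec {R : Type*} [CommRing R] (N : Matrix (Fin 2) (Fin 2) R) (v w : Fin 2 → R) :
    (N *ᵥ v) 0 * (N *ᵥ w) 1 - (N *ᵥ v) 1 * (N *ᵥ w) 0 = N.det * (v 0 * w 1 - v 1 * w 0) := by
  simp only [mulVec, dotProduct, Fin.sum_univ_two, det_fin_two]
  ring

lemma sub_mem_latticePts {x y : Fin 2 → ℝ} (hx : x ∈ latticePts) (hy : y ∈ latticePts) :
    x - y ∈ latticePts := by
  obtain ⟨p, rfl⟩ := hx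
  obtain ⟨q, rfl⟩ := hy
  exact ⟨p - q, by ext; simp⟩

section Sector

variable {v w : Fin 2 → ℤ}

/-- By Cramer's rule, the coordinates of `x` in the basis `v, w` are the two cross products
divided by `v 0 * w 1 - v 1 * w 0`. -/
lemma mem_sector2_of_mul_cross_nonneg (hvw : v 0 * w 1 - v 1 * w 0 ≠ 0) {x : Fin 2 → ℝ}
    (hs : 0 ≤ (x 0 * w 1 - x 1 * w 0) * (v 0 * w 1 - v 1 * w 0 : ℤ))
    (ht : 0 ≤ (v 0 * x 1 - v 1 * x 0) * (v 0 * w 1 - v 1 * w 0 : ℤ)) :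
    x ∈ sector2 v w := by
  set D : ℝ := ((v 0 * w 1 - v 1 * w 0 : ℤ) : ℝ) with hDdef
  have hD : D ≠ 0 := Int.cast_ne_zero.mpr hvw
  have coord_nonneg : ∀ a : ℝ, 0 ≤ a * D → 0 ≤ a / D := fun a ha => by
    rw [← mul_div_mul_right a D hD]
    exact div_nonneg ha (mul_self_nonneg D)
  refine ⟨(x 0 * w 1 - x 1 * w 0) / D, (v 0 * x 1 - v 1 * x 0) / D,
    coord_nonneg _ hs, coord_nonneg _ ht, ?_⟩
  push_cast at hDdef
  ext i
  fin_cases i <;>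
  · simp only [Fin.zero_eta, Fin.mk_one, Fin.isValue]
    field_simp
    rw [hDdef]
    ring

lemma exists_lattice_box_subset_sector2 (hvw : v 0 * w 1 - v 1 * w 0 ≠ 0) :
    ∃ p : Fin 2 → ℤ, ∀ u : Fin 2 → ℤ, (∀ i, |u i| ≤ 1) →
      (fun i => ((p + u) i : ℝ)) ∈ sector2 v w := by
  set M := |v 0| + |v 1| + |w 0| + |w 1|
  refine ⟨M • (v + w), fun u hu => mem_sector2_of_mul_cross_nonneg hvw ?_ ?_⟩
  · have hc : |w 1 * u 0 - w 0 * u 1| ≤ M := (abs_mul_sub_mul_le (hu 0) (hu 1)).trans (by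
      linarith [abs_nonneg (v 0), abs_nonneg (v 1)])
    have hcross : ((M • (v + w) + u) 0 * w 1 - (M • (v + w) + u) 1 * w 0) * (v 0 * w 1 - v 1 * w 0)
        = (M * (v 0 * w 1 - v 1 * w 0) + (w 1 * u 0 - w 0 * u 1)) * (v 0 * w 1 - v 1 * w 0) := by
      simp only [Pi.add_apply, Pi.smul_apply, smul_eq_mul]; ring
    exact_mod_cast hcross ▸ add_mul_nonneg_of_abs_le hvw hc
  · have hc : |v 0 * u 1 - v 1 * u 0| ≤ M := (abs_mul_sub_mul_le (hu 1) (hu 0)).trans (by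
      linarith [abs_nonneg (w 0), abs_nonneg (w 1)])
    have hcross : (v 0 * (M • (v + w) + u) 1 - v 1 * (M • (v + w) + u) 0) * (v 0 * w 1 - v 1 * w 0)
        = (M * (v 0 * w 1 - v 1 * w 0) + (v 0 * u 1 - v 1 * u 0)) * (v 0 * w 1 - v 1 * w 0) := by
      simp only [Pi.add_apply, Pi.smul_apply, smul_eq_mul]; ring
    exact_mod_cast hcross ▸ add_mul_nonneg_of_abs_le hvw hc

lemma sector2_mulVec_subset_image (N : Matrix (Fin 2) (Fin 2) ℤ) :
    sector2 (N *ᵥ v) (N *ᵥ w) ⊆ (N.map ((↑) : ℤ → ℝ)).mulVec '' sector2 v w := by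
  rintro _ ⟨s, t, hs, ht, rfl⟩
  refine ⟨_, ⟨s, t, hs, ht, rfl⟩, ?_⟩
  ext i
  simp only [mulVec, dotProduct, Fin.sum_univ_two, map_apply]
  push_cast
  ring

lemma exists_map_intCast_eq_of_mulVec_mem_latticePts (hvw : v 0 * w 1 - v 1 * w 0 ≠ 0)
    {A : Matrix (Fin 2) (Fin 2) ℝ}
    (hA : ∀ x ∈ sector2 v w, x ∈ latticePts → A *ᵥ x ∈ latticePts) :
    ∃ N : Matrix (Fin 2) (Fin 2) ℤ, N.map (↑) = A := by
  obtain ⟨p, hp⟩ := exists_lattice_box_subset_sector2 hvw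
  have hcol : ∀ j, A.col j ∈ latticePts := fun j => by
    have hbox : ∀ i, |(Pi.single j 1 : Fin 2 → ℤ) i| ≤ 1 := fun i => by
      by_cases h : i = j <;> simp [h]
    have hdiff := sub_mem_latticePts (hA _ (hp _ hbox) ⟨_, rfl⟩) (hA _ (hp 0 (by simp)) ⟨_, rfl⟩)
    rw [← mulVec_sub] at hdiff
    convert hdiff using 1
    rw [← mulVec_single_one]
    congr 1
    ext i
    by_cases h : i = j <;> simp [Pi.single_apply, h]
  choose c hc using hcol
  exact ⟨(of c)ᵀ, by ext i j; exact (congrFun (hc j) i).symm⟩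

lemma exists_isUnit_det_map_intCast_eq (hvw : v 0 * w 1 - v 1 * w 0 ≠ 0)
    {A : Matrix (Fin 2) (Fin 2) ℝ} (hA : A.det ≠ 0)
    (hlat : ∀ x ∈ sector2 v w, A *ᵥ x ∈ latticePts ↔ x ∈ latticePts) :
    ∃ N : Matrix (Fin 2) (Fin 2) ℤ, IsUnit N.det ∧ N.map (↑) = A := by
  obtain ⟨N, rfl⟩ := exists_map_intCast_eq_of_mulVec_mem_latticePts hvw fun x hx => (hlat x hx).2
  have hN : N.det ≠ 0 := fun h => hA (by rw [← Int.cast_det, h, Int.cast_zero])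
  have hvw' : (N *ᵥ v) 0 * (N *ᵥ w) 1 - (N *ᵥ v) 1 * (N *ᵥ w) 0 ≠ 0 := by
    rw [cross_mulVec]; exact mul_ne_zero hN hvw
  obtain ⟨M, hM⟩ := exists_map_intCast_eq_of_mulVec_mem_latticePts hvw'
    (A := (N.map (↑))⁻¹) fun y hy hyΛ => by
      obtain ⟨x, hx, rfl⟩ := sector2_mulVec_subset_image N hy
      rw [mulVec_mulVec, nonsing_inv_mul _ (isUnit_iff_ne_zero.mpr hA), one_mulVec]
      exact (hlat x hx).1 hyΛ
  refine ⟨N, isUnit_det_of_right_inverse (B := M) ?_, rfl⟩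
  apply map_injective (Int.cast_injective (α := ℝ))
  change (N * M).map (Int.castRingHom ℝ) = (1 : Matrix _ _ ℤ).map (Int.castRingHom ℝ)
  rw [Matrix.map_mul, Matrix.map_one _ (map_zero _) (map_one _)]
  exact (congrArg (_ * ·) hM).trans (mul_nonsing_inv _ (isUnit_iff_ne_zero.mpr hA))

end Sector

theorem stmt6_general (F : (Fin 2 → ℝ) → (Fin 2 → ℝ))
    (hhomeo : ∃ H : (Fin 2 → ℝ) ≃ₜ (Fin 2 → ℝ), ⇑H = F)
    (hlat : F '' latticePts = latticePts)
    (d : ℕ) (L : Fin d → Matrix (Fin 2) (Fin 2) ℝ)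
    (v w : Fin d → Fin 2 → ℤ)
    (hind : ∀ i, (v i 0) * (w i 1) - (v i 1) * (w i 0) ≠ 0)
    (hpl : ∀ i, ∀ x ∈ sector2 (v i) (w i), F x = (L i).mulVec x)
    (hor : ∀ i, 0 < (L i).det) :
    ∀ i, ∃ N : Matrix (Fin 2) (Fin 2) ℤ, N.det = 1 ∧ ∀ k l, L i k l = (N k l : ℝ) := by
  obtain ⟨H, rfl⟩ := hhomeo
  have hΛ : ∀ x, H x ∈ latticePts ↔ x ∈ latticePts := fun x => by
    simpa only [hlat] using H.injective.mem_set_image (s := latticePts) (a := x)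
  intro i
  obtain ⟨N, hunit, hN⟩ := exists_isUnit_det_map_intCast_eq (hind i) (hor i).ne'
    fun x hx => hpl i x hx ▸ hΛ x
  have hpos : 0 < N.det := by
    have := hor i
    rwa [← hN, ← Int.cast_det, Int.cast_pos] at this
  refine ⟨N, ?_, fun k l => by rw [← hN, map_apply]⟩
  rcases Int.isUnit_iff.mp hunit with h | h <;> omega

/-- an orientation preserving piecewise linear homeomorphism of ℝ² mapping
ℤ² bijectively onto ℤ² has all its linear pieces in SL(2,ℤ). -/
theorem stmt6 (F : (Fin 2 → ℝ) → (Fin 2 → ℝ))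
    (hhomeo : ∃ H : (Fin 2 → ℝ) ≃ₜ (Fin 2 → ℝ), ⇑H = F)
    (hlat : F '' latticePts = latticePts)
    (d : ℕ) (L : Fin d → Matrix (Fin 2) (Fin 2) ℝ)
    (v w : Fin d → Fin 2 → ℤ)
    (hind : ∀ i, (v i 0) * (w i 1) - (v i 1) * (w i 0) ≠ 0)
    (hcover : (⋃ i, sector2 (v i) (w i)) = Set.univ)
    (hpl : ∀ i, ∀ x ∈ sector2 (v i) (w i), F x = (L i).mulVec x)
    (hor : ∀ i, 0 < (L i).det) :
    ∀ i, ∃ N : Matrix (Fin 2) (Fin 2) ℤ, N.det = 1 ∧ ∀ k l, L i k l = (N k l : ℝ) :=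
  stmt6_general F hhomeo hlat d L v w hind hpl hor
end

section
/- Let F : R^2 → R^2 be linear with matrix [[4, −3], [3, 4]]. Then the induced map on rays through the origin (equivalently, the induced circle homeomorphism x ↦ F(x)/|F(x)| on the unit circle) has irrational rotation number. -/
/-!
The matrix is `5` times a rotation, so every lift of the induced circle map is a translation
`x ↦ x + c` with `exp (2πic) = (4 + 3i) / 5`, and its translation number is `c`. If `c` were `p / q`, then `((4 + 3i) / 5) ^ q = 1`, i.e. `(4 + 3i) ^ q = 5 ^ q` in
`ℤ[i]`; but the Gaussian prime `2 + i` divides `5` and not `4 + 3i`.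
-/

open Real

theorem Zsqrtd.irreducible_of_prime_natAbs_norm {d : ℤ} {x : ℤ√d} (hx : x.norm.natAbs.Prime) :
    Irreducible x where
  not_isUnit hunit := hx.ne_one (Zsqrtd.norm_eq_one_iff.2 hunit)
  isUnit_or_isUnit a b hab := by
    have hnorm : a.norm.natAbs * b.norm.natAbs = x.norm.natAbs := by
      rw [hab, Zsqrtd.norm_mul, Int.natAbs_mul]
    rcases hx.eq_one_or_self_of_dvd _ (Dvd.intro _ hnorm) with ha | ha
    · exact .inl (Zsqrtd.norm_eq_one_iff.1 ha)
    · refine .inr (Zsqrtd.norm_eq_one_iff.1 ?_)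
      rw [ha] at hnorm
      exact (Nat.mul_eq_left hx.ne_zero).1 hnorm

theorem GaussianInt.four_add_three_i_pow_ne_five_pow {n : ℕ} (hn : n ≠ 0) :
    (⟨4, 3⟩ : GaussianInt) ^ n ≠ 5 ^ n := by
  intro h
  -- `2 + i` is a Gaussian prime dividing `5 = (2 + i) (2 - i)` but not `4 + 3i = i (2 - i)²`.
  have hprime : Prime (⟨2, 1⟩ : GaussianInt) :=
    UniqueFactorizationMonoid.irreducible_iff_prime.1 <|
      Zsqrtd.irreducible_of_prime_natAbs_norm (by decide)
  have hdvd : (⟨2, 1⟩ : GaussianInt) ∣ (⟨4, 3⟩ : GaussianInt) ^ n :=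
    h ▸ dvd_pow ⟨⟨2, -1⟩, by decide⟩ hn
  obtain ⟨y, hy⟩ := hprime.dvd_of_dvd_pow hdvd
  simp only [Zsqrtd.ext_iff, Zsqrtd.re_mul, Zsqrtd.im_mul] at hy
  omega

theorem Complex.four_add_three_mul_I_div_five_pow_ne_one {n : ℕ} (hn : n ≠ 0) :
    ((4 + 3 * I) / 5 : ℂ) ^ n ≠ 1 := by
  have hcast : ((⟨4, 3⟩ : GaussianInt) : ℂ) = 4 + 3 * I := by
    rw [GaussianInt.toComplex_def']; norm_num
  rw [div_pow, Ne, div_eq_one_iff_eq (pow_ne_zero _ (by norm_num)), ← hcast]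
  intro h
  refine GaussianInt.four_add_three_i_pow_ne_five_pow hn (GaussianInt.toComplex_injective ?_)
  simpa [map_ofNat] using h

theorem irrational_of_forall_exp_pow_ne_one {x : ℝ}
    (h : ∀ n : ℕ, n ≠ 0 → Complex.exp (2 * π * x * Complex.I) ^ n ≠ 1) : Irrational x := by
  rintro ⟨r, rfl⟩
  refine h r.den r.den_ne_zero ?_
  rw [← Complex.exp_nat_mul, Complex.exp_eq_one_iff]
  refine ⟨r.num, ?_⟩
  rw [Rat.cast_def]
  push_cast
  field_simp

theorem exists_int_eq_add_of_cos_eq_of_sin_eq {a b : ℝ} (hcos : cos (2 * π * a) = cos (2 * π * b))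
    (hsin : sin (2 * π * a) = sin (2 * π * b)) : ∃ n : ℤ, a = b + n := by
  obtain ⟨n, hn⟩ := Real.Angle.angle_eq_iff_two_pi_dvd_sub.1 (Real.Angle.cos_sin_inj hcos hsin)
  refine ⟨n, mul_left_cancel₀ two_pi_pos.ne' ?_⟩
  linear_combination hn

namespace CircleDeg1Lift

theorem eq_add_map_zero_of_forall_exists_int {f : CircleDeg1Lift}
    (hf : ∀ x, ∃ n : ℤ, f x = x + f 0 + n) (x : ℝ) : f x = x + f 0 := by
  obtain ⟨n, hn⟩ := hf x
  have hlow : -1 < (n : ℝ) := by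
    linarith [f.le_map_of_map_zero x, Int.lt_floor_add_one x]
  have hup : (n : ℝ) < 1 := by
    linarith [f.map_le_of_map_zero x, Int.ceil_lt_add_one x]
  have hn0 : n = 0 := by
    have : -1 < n := by exact_mod_cast hlow
    have : n < 1 := by exact_mod_cast hup
    omega
  simp [hn, hn0]

theorem translationNumber_eq_of_forall_eq_add {f : CircleDeg1Lift} {c : ℝ}
    (hf : ∀ x, f x = x + c) : f.translationNumber = c := by
  have : f = translate (Multiplicative.ofAdd c) := ext fun x => by
    rw [hf, translate_apply, add_comm]
  rw [this, translationNumber_translate]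

end CircleDeg1Lift

open Real in
/-- the circle homeomorphism induced on rays by the linear map with
matrix [[4, −3], [3, 4]] (sending a unit vector `v` to `F v / ‖F v‖`) has irrational
rotation number.  Here `f` is any lift of the induced circle map via
`θ ↦ (cos 2πθ, sin 2πθ)`. -/
theorem stmt12 (f : CircleDeg1Lift)
    (hf : ∀ θ : ℝ,
      cos (2 * π * f θ) =
        (4 * cos (2 * π * θ) - 3 * sin (2 * π * θ)) /
          Real.sqrt ((4 * cos (2 * π * θ) - 3 * sin (2 * π * θ)) ^ 2 +
            (3 * cos (2 * π * θ) + 4 * sin (2 * π * θ)) ^ 2) ∧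
      sin (2 * π * f θ) =
        (3 * cos (2 * π * θ) + 4 * sin (2 * π * θ)) /
          Real.sqrt ((4 * cos (2 * π * θ) - 3 * sin (2 * π * θ)) ^ 2 +
            (3 * cos (2 * π * θ) + 4 * sin (2 * π * θ)) ^ 2)) :
    Irrational f.translationNumber := by
  have hnorm (x : ℝ) : √((4 * cos x - 3 * sin x) ^ 2 + (3 * cos x + 4 * sin x) ^ 2) = 5 := by
    rw [show (4 * cos x - 3 * sin x) ^ 2 + (3 * cos x + 4 * sin x) ^ 2 = 5 ^ 2 by
      linear_combination 25 * sin_sq_add_cos_sq x, sqrt_sq (by norm_num)]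
  simp only [hnorm] at hf
  obtain ⟨hcos, hsin⟩ : cos (2 * π * f 0) = 4 / 5 ∧ sin (2 * π * f 0) = 3 / 5 := by
    simpa using hf 0
  have hrot (θ : ℝ) : ∃ n : ℤ, f θ = θ + f 0 + n :=
    exists_int_eq_add_of_cos_eq_of_sin_eq
      (by rw [mul_add, cos_add, hcos, hsin, (hf θ).1]; ring)
      (by rw [mul_add, sin_add, hcos, hsin, (hf θ).2]; ring)
  rw [CircleDeg1Lift.translationNumber_eq_of_forall_eq_add
    (CircleDeg1Lift.eq_add_map_zero_of_forall_exists_int hrot)]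
  refine irrational_of_forall_exp_pow_ne_one fun n hn => ?_
  have hexp : Complex.exp (2 * π * f 0 * Complex.I) = (4 + 3 * Complex.I) / 5 := by
    rw [← Complex.ofReal_ofNat, ← Complex.ofReal_mul, ← Complex.ofReal_mul, Complex.exp_mul_I,
      ← Complex.ofReal_cos, ← Complex.ofReal_sin, hcos, hsin]
    push_cast
    ring
  rw [hexp]
  exact Complex.four_add_three_mul_I_div_five_pow_ne_one hn
end

section
/- The argument of the Gaussian integer 4 + 3i is an irrational multiple of π; equivalently, arctan(3/4)/π is irrational. -/
open Real

theorem irrational_div_pi_of_cos_eq_rat {θ : ℝ} {q : ℚ} (hcos : cos θ = q)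
    (hq : (q : ℝ) ∉ ({-1, -1 / 2, 0, 1 / 2, 1} : Set ℝ)) : Irrational (θ / π) := by
  rintro ⟨r, hr⟩
  have hθ : θ = r * π := by rw [hr, div_mul_cancel₀ θ pi_ne_zero]
  exact hq (hcos ▸ niven ⟨r, hθ⟩ ⟨q, hcos⟩)

theorem cos_arctan_three_div_four : cos (arctan (3 / 4)) = 4 / 5 := by
  rw [cos_arctan, show (1 + (3 / 4 : ℝ) ^ 2) = (5 / 4) ^ 2 by norm_num,
    sqrt_sq (by norm_num)]
  norm_num

/-- the argument of 4 + 3i is an irrational multiple of π;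
equivalently arctan(3/4)/π is irrational. -/
theorem stmt13 : Irrational (Real.arctan (3 / 4) / Real.pi) :=
  irrational_div_pi_of_cos_eq_rat (q := 4 / 5) (by rw [cos_arctan_three_div_four]; norm_num)
    (by norm_num)
end

section
/- Every primitive lattice point w in the interior of a regular sector generated by basis u1, u2 of Z^2 (det[u1 u2] = 1) can be written uniquely as w = v + v' where v, v' are primitive lattice points in the sector with det[v v'] = 1 (v, v' in counterclockwise order). -/
/-!
In the coordinates `(a, b) ↦ a • u1 + b • u2`, which preserve the determinant because
`det[u1 u2] = 1`, the problem becomes the case `u1 = (1, 0)`, `u2 = (0, 1)`. There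
`w = (a, b)` with `a, b > 0` coprime, and a decomposition `(c, d) + (a - c, b - d)` has
determinant `c * b - d * a`. The equation `c * b - d * a = 1` pins `c` down modulo `a`
(as `b` is invertible mod `a`), and the sector condition forces `1 ≤ c ≤ a`, so there is
exactly one admissible `c`, and then `d = (c * b - 1) / a` lies in `[0, b]`.
-/

namespace LatticeSector

def latticeComb (u1 u2 : ℤ × ℤ) (a b : ℤ) : ℤ × ℤ :=
  (a * u1.1 + b * u2.1, a * u1.2 + b * u2.2)

def cross (v w : ℤ × ℤ) : ℤ := v.1 * w.2 - v.2 * w.1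

variable {u1 u2 : ℤ × ℤ}

theorem cross_latticeComb (a b c d : ℤ) :
    cross (latticeComb u1 u2 a b) (latticeComb u1 u2 c d) = (a * d - b * c) * cross u1 u2 := by
  simp only [cross, latticeComb]
  ring

theorem latticeComb_add (a b c d : ℤ) :
    latticeComb u1 u2 a b + latticeComb u1 u2 c d = latticeComb u1 u2 (a + c) (b + d) := by
  simp only [latticeComb, Prod.mk_add_mk, Prod.mk.injEq]
  constructor <;> ring

theorem latticeComb_inj (hu : cross u1 u2 ≠ 0) {a b c d : ℤ}
    (h : latticeComb u1 u2 a b = latticeComb u1 u2 c d) : a = c ∧ b = d := by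
  simp only [latticeComb, Prod.mk.injEq] at h
  obtain ⟨h1, h2⟩ := h
  refine ⟨mul_right_cancel₀ hu ?_, mul_right_cancel₀ hu ?_⟩ <;> simp only [cross]
  · linear_combination u2.2 * h1 - u2.1 * h2
  · linear_combination u1.1 * h2 - u1.2 * h1

theorem isCoprime_of_latticeComb {a b : ℤ}
    (h : IsCoprime (latticeComb u1 u2 a b).1 (latticeComb u1 u2 a b).2) : IsCoprime a b := by
  obtain ⟨x, y, hxy⟩ := h
  exact ⟨x * u1.1 + y * u1.2, x * u2.1 + y * u2.2, by
    simp only [latticeComb] at hxy; linear_combination hxy⟩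

theorem isCoprime_fst_of_cross_eq_one {v w : ℤ × ℤ} (h : cross v w = 1) : IsCoprime v.1 v.2 :=
  ⟨w.2, -w.1, by simp only [cross] at h; linear_combination h⟩

theorem isCoprime_snd_of_cross_eq_one {v w : ℤ × ℤ} (h : cross v w = 1) : IsCoprime w.1 w.2 :=
  ⟨-v.2, v.1, by simp only [cross] at h; linear_combination h⟩

theorem exists_mul_sub_mul_eq_one {a b : ℤ} (ha : 0 < a) (hb : 0 < b) (hab : IsCoprime a b) :
    ∃ c d : ℤ, 0 ≤ c ∧ c ≤ a ∧ 0 ≤ d ∧ d ≤ b ∧ c * b - d * a = 1 := by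
  obtain ⟨s, t, hst⟩ := hab
  -- the representative of `t = b⁻¹ mod a` in `[1, a]`
  set c := (t - 1) % a + 1 with hc
  have hc1 : 1 ≤ c := by have := Int.emod_nonneg (t - 1) ha.ne'; omega
  have hca : c ≤ a := by have := Int.emod_lt_of_pos (t - 1) ha; omega
  have hdvd : a ∣ c * b - 1 :=
    ⟨-s - (t - 1) / a * b, by rw [hc, Int.emod_def]; linear_combination hst⟩
  obtain ⟨d, hd⟩ := hdvd
  refine ⟨c, d, by omega, hca, ?_, ?_, by linear_combination hd⟩
  · nlinarith
  · nlinarith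

theorem eq_of_mul_sub_mul_eq_one {a b c d c' d' : ℤ} (ha : 0 < a) (hab : IsCoprime a b)
    (hc : 0 ≤ c) (hca : c ≤ a) (hd : 0 ≤ d) (h : c * b - d * a = 1)
    (hc' : 0 ≤ c') (hca' : c' ≤ a) (hd' : 0 ≤ d') (h' : c' * b - d' * a = 1) :
    c = c' ∧ d = d' := by
  have one_le {c d : ℤ} (hc : 0 ≤ c) (hd : 0 ≤ d) (h : c * b - d * a = 1) : 1 ≤ c := by
    obtain rfl | hc := hc.eq_or_lt
    · nlinarith [mul_nonneg hd ha.le]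
    · exact hc
  have hc1 := one_le hc hd h
  have hc1' := one_le hc' hd' h'
  have hdvd : a ∣ c - c' := hab.dvd_of_dvd_mul_right ⟨d - d', by linear_combination h - h'⟩
  have hcc : c = c' := by
    have := Int.eq_zero_of_abs_lt_dvd hdvd (abs_sub_lt_iff.2 ⟨by omega, by omega⟩)
    omega
  subst hcc
  exact ⟨rfl, mul_right_cancel₀ ha.ne' (by linear_combination h' - h)⟩

end LatticeSector

open LatticeSector

/-- every primitive lattice point in the interior of a regular sector has
a unique decomposition w = v + v' into primitive lattice points of the sector with
det[v v'] = 1 (the Stern–Brocot parent structure). -/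
theorem stmt16 (u1 u2 : ℤ × ℤ) (hdet : u1.1 * u2.2 - u1.2 * u2.1 = 1) (w : ℤ × ℤ)
    (hprim : IsCoprime w.1 w.2)
    (hint : ∃ a b : ℤ, 0 < a ∧ 0 < b ∧
      w = (a * u1.1 + b * u2.1, a * u1.2 + b * u2.2)) :
    ∃! p : (ℤ × ℤ) × (ℤ × ℤ),
      IsCoprime p.1.1 p.1.2 ∧ IsCoprime p.2.1 p.2.2 ∧
      (∃ a b : ℤ, 0 ≤ a ∧ 0 ≤ b ∧ p.1 = (a * u1.1 + b * u2.1, a * u1.2 + b * u2.2)) ∧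
      (∃ a b : ℤ, 0 ≤ a ∧ 0 ≤ b ∧ p.2 = (a * u1.1 + b * u2.1, a * u1.2 + b * u2.2)) ∧
      p.1.1 * p.2.2 - p.1.2 * p.2.1 = 1 ∧
      w = p.1 + p.2 := by
  change cross u1 u2 = 1 at hdet
  obtain ⟨a, b, ha, hb, rfl⟩ := hint
  have hab : IsCoprime a b := isCoprime_of_latticeComb hprim
  obtain ⟨c, d, hc, hca, hd, hdb, hcd⟩ := exists_mul_sub_mul_eq_one ha hb hab
  have hsplit : cross (latticeComb u1 u2 c d) (latticeComb u1 u2 (a - c) (b - d)) = 1 := by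
    rw [cross_latticeComb, hdet]
    linear_combination hcd
  refine ⟨(latticeComb u1 u2 c d, latticeComb u1 u2 (a - c) (b - d)),
    ⟨isCoprime_fst_of_cross_eq_one hsplit, isCoprime_snd_of_cross_eq_one hsplit,
      ⟨c, d, hc, hd, rfl⟩, ⟨a - c, b - d, by omega, by omega, rfl⟩, hsplit, ?_⟩, ?_⟩
  · change latticeComb u1 u2 a b = _
    rw [latticeComb_add, add_sub_cancel, add_sub_cancel]
  rintro ⟨v, v'⟩ ⟨-, -, ⟨c', d', hc', hd', rfl⟩, ⟨e', f', he', hf', rfl⟩, hdet', hsum⟩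
  change latticeComb u1 u2 a b = latticeComb u1 u2 c' d' + latticeComb u1 u2 e' f' at hsum
  change cross (latticeComb u1 u2 c' d') (latticeComb u1 u2 e' f') = 1 at hdet'
  rw [latticeComb_add] at hsum
  rw [cross_latticeComb, hdet, mul_one] at hdet'
  obtain ⟨rfl, rfl⟩ := latticeComb_inj (by rw [hdet]; exact one_ne_zero) hsum
  obtain ⟨rfl, rfl⟩ := eq_of_mul_sub_mul_eq_one ha hab hc hca hd hcd hc' (by omega) hd'
    (by linear_combination hdet')
  simp only [add_sub_cancel_left]
  rfl
end
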